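/- Let R be a GCD domain containing pairwise relatively prime elements a, b, c such that the ideal ⟨b,c⟩ is not principal and a ∉ ⟨b,c⟩. Let G be the 3-cycle with edges v_1v_2, v_2v_3, v_3v_1 labeled a, b, c respectively. Then the spline module R_G has no flow-up class basis. -/
import Mathlib


/-- The module of generalized splines on the 3-cycle with edges `v₁v₂, v₂v₃, v₃v₁`
labeled `a, b, c` respectively. -/
def cycleSpline {R : Type*} [CommRing R] (a b c : R) : Submodule R (Fin 3 → R) where
  carrier := {F | a ∣ F 0 - F 1 ∧ b ∣ F 1 - F 2 ∧ c ∣ F 2 - F 0}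
  add_mem' := by
    rintro x y ⟨hx1, hx2, hx3⟩ ⟨hy1, hy2, hy3⟩
    exact ⟨by simpa [add_sub_add_comm] using dvd_add hx1 hy1,
           by simpa [add_sub_add_comm] using dvd_add hx2 hy2,
           by simpa [add_sub_add_comm] using dvd_add hx3 hy3⟩
  zero_mem' := by simp
  smul_mem' := by
    rintro r x ⟨hx1, hx2, hx3⟩
    exact ⟨by simpa [Pi.smul_apply, smul_eq_mul, ← mul_sub] using hx1.mul_left r,
           by simpa [Pi.smul_apply, smul_eq_mul, ← mul_sub] using hx2.mul_left r,
           by simpa [Pi.smul_apply, smul_eq_mul, ← mul_sub] using hx3.mul_left r⟩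

/-- In a GCD domain with pairwise relatively prime elements `a, b, c` such that the ideal
`⟨b, c⟩` is not principal and `a ∉ ⟨b, c⟩`, the spline module on the 3-cycle with edge
labels `a, b, c` has no flow-up class basis. -/
theorem stmt17 {R : Type*} [CommRing R] [IsDomain R] [GCDMonoid R] (a b c : R)
    (hab : IsRelPrime a b) (hbc : IsRelPrime b c) (hac : IsRelPrime a c)
    (hnp : ¬ (Ideal.span ({b, c} : Set R)).IsPrincipal)
    (ha : a ∉ Ideal.span ({b, c} : Set R)) :
    ¬ ∃ B : Fin 3 → Fin 3 → R,
        (∀ i, B i ∈ cycleSpline a b c) ∧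
        (∀ i j, j < i → B i j = 0) ∧ (∀ i, B i i ≠ 0) ∧
        LinearIndependent R B ∧
        Submodule.span R (Set.range B) = (cycleSpline a b c : Submodule R (Fin 3 → R)) := by
  rintro ⟨B, hmem, hz, hdiag, -, hspan⟩
  have h10 : B 1 0 = 0 := hz 1 0 (by decide)
  have h20 : B 2 0 = 0 := hz 2 0 (by decide)
  have h21 : B 2 1 = 0 := hz 2 1 (by decide)
  obtain ⟨ha1, hb1, hc1⟩ := hmem 1
  rw [h10, zero_sub, dvd_neg] at ha1
  rw [h10, sub_zero] at hc1
  -- key: any spline with first coordinate 0 has second coordinate divisible by B 1 1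
  have key : ∀ F : Fin 3 → R, F ∈ cycleSpline a b c → F 0 = 0 → B 1 1 ∣ F 1 := by
    intro F hF hF0
    rw [← hspan, Submodule.mem_span_range_iff_exists_fun] at hF
    obtain ⟨cf, hcf⟩ := hF
    have e0 := congrFun hcf 0
    have e1 := congrFun hcf 1
    simp only [Finset.sum_apply, Fin.sum_univ_three, Pi.smul_apply, smul_eq_mul,
      h10, h20, h21, hF0, mul_zero, add_zero] at e0 e1
    have hc0 : cf 0 = 0 := by
      rcases mul_eq_zero.mp e0 with h | h
      · exact h
      · exact absurd h (hdiag 0)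
    rw [hc0, zero_mul, zero_add] at e1
    exact ⟨cf 1, by rw [← e1]; ring⟩
  have hsab : (![0, a * b, 0] : Fin 3 → R) ∈ cycleSpline a b c := by
    exact ⟨by simpa using dvd_neg.mpr ⟨b, rfl⟩, by simpa using ⟨a, mul_comm a b⟩,
      by simp⟩
  have hsac : (![0, a * c, a * c] : Fin 3 → R) ∈ cycleSpline a b c := by
    exact ⟨by simpa using dvd_neg.mpr ⟨c, rfl⟩, by simp,
      by simpa using ⟨a, mul_comm a c⟩⟩
  have hdab : B 1 1 ∣ a * b := by simpa using key _ hsab rfl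
  have hdac : B 1 1 ∣ a * c := by simpa using key _ hsac rfl
  obtain ⟨m, hm⟩ := ha1
  have ha0 : a ≠ 0 := by
    intro h
    exact hdiag 1 (by rw [hm, h, zero_mul])
  rw [hm] at hdab hdac
  have hmb : m ∣ b := (mul_dvd_mul_iff_left ha0).mp hdab
  have hmc : m ∣ c := (mul_dvd_mul_iff_left ha0).mp hdac
  obtain ⟨u, hu⟩ := hbc hmb hmc
  -- B 1 1 ∈ ⟨b, c⟩
  have hyI : B 1 1 ∈ Ideal.span ({b, c} : Set R) := by
    rw [Ideal.mem_span_pair]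
    obtain ⟨k, hk⟩ := hb1
    obtain ⟨l, hl⟩ := hc1
    exact ⟨k, l, by rw [mul_comm k b, mul_comm l c, ← hk, ← hl]; ring⟩
  apply ha
  have haeq : a = B 1 1 * ↑u⁻¹ := by
    rw [hm, ← hu, mul_assoc, Units.mul_inv, mul_one]
  rw [haeq]
  exact Ideal.mul_mem_right _ _ hyI
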